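/- arXiv:2311.11817 — 7 statements merged into one kernel-verified Lean document; each statement's English description precedes it below -/
import Mathlib

section
/- In the single-step symmetric rendezvous task on the cycle graph C_n with n odd and n ≥ 3, where two agents start at independently uniformly random vertices and must each move to an adjacent vertex, the maximum success probability over all deterministic symmetric strategies is (2n − 1)/n² when n ≡ 1 or 3 (mod 4); in particular for the triangle C_3 it equals 5/9. -/
/-- The fiber size of `f` over `a`. -/
def fiberCard {V : Type} [Fintype V] [DecidableEq V] (f : V → V) (a : V) : ℕ :=
  (Finset.univ.filter (fun x => f x = a)).card

open Finset

private lemma count_mod4 (k : ℕ) :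
    ((Finset.range (2*k+1)).filter (fun i => i % 4 < 2)).card = k + 1 := by
  induction k with
  | zero => decide
  | succ k ih =>
    have h1 : 2*(k+1)+1 = (2*k+1) + 1 + 1 := by ring
    rw [h1, Finset.range_add_one, Finset.filter_insert, Finset.range_add_one, Finset.filter_insert]
    have hm1 : (2*k+1) ∉ (Finset.range (2*k+1)).filter (fun i => i % 4 < 2) := by simp
    split_ifs with h2 h3 h3
    · omega
    · rw [Finset.card_insert_of_notMem (by simp)]
      omega
    · rw [Finset.card_insert_of_notMem hm1]
      omega
    · omega

section main

variable {n : ℕ} [NeZero n]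

private lemma two_ne_zero'' (hn : 3 ≤ n) : (2 : ZMod n) ≠ 0 := by
  intro h
  have h2 : ((2:ℕ) : ZMod n) = 0 := by push_cast; exact h
  rw [ZMod.natCast_eq_zero_iff] at h2
  have := Nat.le_of_dvd (by norm_num) h2
  omega

private lemma sub_ne_add (hn : 3 ≤ n) (a : ZMod n) : a - 1 ≠ a + 1 := by
  intro h
  apply two_ne_zero'' hn
  have : a + 1 - (a - 1) = 0 := by rw [← h]; ring
  calc (2 : ZMod n) = a + 1 - (a - 1) := by ring
  _ = 0 := this

private lemma add_two_ne (hn : 3 ≤ n) (a : ZMod n) : a + 2 ≠ a := by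
  intro h
  apply two_ne_zero'' hn
  calc (2 : ZMod n) = a + 2 - a := by ring
  _ = 0 := by rw [h]; ring

private lemma fiber_eq (f : ZMod n → ZMod n) (hf : ∀ x, f x = x - 1 ∨ f x = x + 1)
    (hn : 3 ≤ n) (a : ZMod n) :
    fiberCard f a = (if f (a-1) = a then 1 else 0) + (if f (a+1) = a then 1 else 0) := by
  unfold fiberCard
  have hsub : Finset.univ.filter (fun x => f x = a)
      = ({a-1, a+1} : Finset (ZMod n)).filter (fun x => f x = a) := by
    ext x
    simp only [Finset.mem_filter, Finset.mem_univ, true_and, Finset.mem_insert,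
      Finset.mem_singleton]
    constructor
    · intro hx
      refine ⟨?_, hx⟩
      rcases hf x with h | h
      · right; rw [h] at hx; rw [← hx]; ring
      · left; rw [h] at hx; rw [← hx]; ring
    · exact fun h => h.2
  rw [hsub]
  have hne := sub_ne_add hn a
  rw [show ({a-1, a+1} : Finset (ZMod n)) = insert (a-1) {a+1} from rfl,
    Finset.filter_insert, Finset.filter_singleton]
  split_ifs with h1 h2 h2
  · rw [Finset.card_insert_of_notMem (by simpa using hne)]; rfl
  · simp
  · simp
  · simp

private lemma sum_fiber (f : ZMod n → ZMod n) : ∑ a : ZMod n, fiberCard f a = n := by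
  have h := Finset.card_eq_sum_card_fiberwise
    (s := (Finset.univ : Finset (ZMod n))) (t := Finset.univ) (f := f)
    (fun x _ => Finset.mem_univ _)
  unfold fiberCard
  rw [← h, Finset.card_univ, ZMod.card]

private lemma upper_bound (hn : 3 ≤ n) (hodd : Odd n)
    (f : ZMod n → ZMod n) (hf : ∀ x, f x = x - 1 ∨ f x = x + 1) :
    ∑ a : ZMod n, (fiberCard f a) ^ 2 ≤ 2 * n - 1 := by
  set c := fiberCard f with hc
  have hle : ∀ a, c a ≤ 2 := by
    intro a; rw [hc, fiber_eq f hf hn a]; split_ifs <;> omega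
  have hsum : ∑ a : ZMod n, c a = n := sum_fiber f
  have hex : ∃ a, c a = 1 := by
    by_contra h
    push_neg at h
    have hmod : ∀ a ∈ (Finset.univ : Finset (ZMod n)), c a % 2 = 0 := by
      intro a _
      have := hle a; have := h a; omega
    have : n % 2 = 0 := by
      rw [← hsum, Finset.sum_nat_mod, Finset.sum_congr rfl hmod]
      simp
    rw [Nat.odd_iff] at hodd
    omega
  obtain ⟨a₀, ha₀⟩ := hex
  have hkey := Finset.add_sum_erase Finset.univ c (Finset.mem_univ a₀)
  have hkey2 : c a₀ ^ 2 + ∑ a ∈ Finset.univ.erase a₀, c a ^ 2 = ∑ a : ZMod n, c a ^ 2 :=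
    Finset.add_sum_erase Finset.univ (fun a => c a ^ 2) (Finset.mem_univ a₀)
  have herase : ∑ a ∈ Finset.univ.erase a₀, c a = n - 1 := by
    rw [ha₀] at hkey; omega
  have hstep : ∑ a ∈ Finset.univ.erase a₀, c a ^ 2 ≤ 2 * (n - 1) := by
    calc ∑ a ∈ Finset.univ.erase a₀, c a ^ 2 ≤ ∑ a ∈ Finset.univ.erase a₀, 2 * c a := by
          apply Finset.sum_le_sum
          intro a _
          have := hle a
          nlinarith [sq_nonneg (c a)]
    _ = 2 * (n - 1) := by rw [← Finset.mul_sum, herase]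
  have h1 : c a₀ ^ 2 = 1 := by rw [ha₀]; ring
  omega

/-- the optimal strategy -/
private def fopt (n : ℕ) [NeZero n] : ZMod n → ZMod n :=
  fun x => if x.val % 4 < 2 then x + 1 else x - 1

private lemma fopt_mem (x : ZMod n) : fopt n x = x - 1 ∨ fopt n x = x + 1 := by
  unfold fopt; split_ifs <;> simp

private lemma val_add_two (hn : 3 ≤ n) (b : ZMod n) : (b + 2).val = (b.val + 2) % n := by
  have h2 : ((2:ℕ) : ZMod n) = (2 : ZMod n) := by push_cast; rfl
  rw [← h2, ZMod.val_add, ZMod.val_natCast, Nat.mod_eq_of_lt (by omega : 2 < n)]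

private lemma fopt_sum (hn : 3 ≤ n) (hodd : Odd n) :
    ∑ a : ZMod n, (fiberCard (fopt n) a) ^ 2 = 2 * n - 1 := by
  obtain ⟨k, hk⟩ := hodd
  have hk1 : 1 ≤ k := by omega
  -- characterize the two indicators
  have hA : ∀ a : ZMod n, (if fopt n (a-1) = a then 1 else 0)
      = (if (a-1).val % 4 < 2 then 1 else 0) := by
    intro a
    unfold fopt
    split_ifs with h1 h2 h2 <;> try rfl
    · exfalso
      have : a - 1 + 1 = a := by ring
      exact h2 this
    · exfalso
      have : a - 1 - 1 = a - 2 := by ring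
      rw [this] at h2
      exact two_ne_zero'' hn (by linear_combination -h2)
  have hB : ∀ a : ZMod n, (if fopt n (a+1) = a then 1 else 0)
      = (if ¬ ((a+1).val % 4 < 2) then 1 else 0) := by
    intro a
    unfold fopt
    split_ifs with h1 h2 h2 <;> try rfl
    · exfalso
      have : a + 1 + 1 = a + 2 := by ring
      rw [this] at h2
      exact add_two_ne hn a h2
    · exfalso
      have : a + 1 - 1 = a := by ring
      rw [this] at h2
      exact h2 rfl
  -- rewrite each square
  have hsq : ∀ a : ZMod n, (fiberCard (fopt n) a) ^ 2
      = fiberCard (fopt n) a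
        + 2 * (if (a-1).val % 4 < 2 ∧ ¬ ((a+1).val % 4 < 2) then 1 else 0) := by
    intro a
    rw [fiber_eq (fopt n) fopt_mem hn a, hA a, hB a]
    split_ifs <;> simp_all <;> ring
  rw [Finset.sum_congr rfl (fun a _ => hsq a), Finset.sum_add_distrib, sum_fiber,
    ← Finset.mul_sum, ← Finset.card_filter]
  -- count the filter via bijection to range (n-2)
  have hcount : (Finset.univ.filter
      (fun a : ZMod n => (a-1).val % 4 < 2 ∧ ¬ ((a+1).val % 4 < 2))).card
      = ((Finset.range (n-2)).filter (fun i => i % 4 < 2)).card := by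
    apply Finset.card_bij (fun a _ => (a - 1).val)
    · -- maps into
      intro a ha
      simp only [Finset.mem_filter, Finset.mem_univ, true_and] at ha
      obtain ⟨h1, h2⟩ := ha
      simp only [Finset.mem_filter, Finset.mem_range]
      refine ⟨?_, h1⟩
      set t := (a-1).val with ht
      have htn : t < n := ZMod.val_lt _
      have haval : (a+1).val = (t + 2) % n := by
        have : a + 1 = (a - 1) + 2 := by ring
        rw [this, val_add_two hn]
      by_contra hcon
      push_neg at hcon
      have hcases : t = n - 2 ∨ t = n - 1 := by omega
      rcases hcases with h | h
      · rw [h, show n - 2 + 2 = n by omega, Nat.mod_self] at haval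
        omega
      · rw [h, show n - 1 + 2 = n + 1 by omega, Nat.add_mod_left,
          Nat.mod_eq_of_lt (by omega)] at haval
        omega
    · -- injective
      intro a ha b hb h
      have := ZMod.val_injective n h
      have : a - 1 = b - 1 := this
      calc a = (a - 1) + 1 := by ring
      _ = (b - 1) + 1 := by rw [this]
      _ = b := by ring
    · -- surjective
      intro i hi
      simp only [Finset.mem_filter, Finset.mem_range] at hi
      obtain ⟨hi1, hi2⟩ := hi
      refine ⟨(i : ZMod n) + 1, ?_, ?_⟩
      · simp only [Finset.mem_filter, Finset.mem_univ, true_and]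
        have hv : ((i : ZMod n) + 1 - 1).val = i := by
          rw [show (i : ZMod n) + 1 - 1 = (i : ZMod n) by ring, ZMod.val_natCast,
            Nat.mod_eq_of_lt (by omega)]
        have hv2 : ((i : ZMod n) + 1 + 1).val = i + 2 := by
          rw [show (i : ZMod n) + 1 + 1 = (i : ZMod n) + 2 by ring, val_add_two hn,
            ZMod.val_natCast, Nat.mod_eq_of_lt (by omega : i < n),
            Nat.mod_eq_of_lt (by omega : i + 2 < n)]
        rw [hv, hv2]
        constructor
        · exact hi2
        · omega
      · rw [show (i : ZMod n) + 1 - 1 = (i : ZMod n) by ring, ZMod.val_natCast,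
          Nat.mod_eq_of_lt (by omega)]
  rw [hcount]
  have : n - 2 = 2 * (k - 1) + 1 := by omega
  rw [this, count_mod4 (k - 1)]
  omega

end main

theorem stmt_4 (n : ℕ) [NeZero n] (hn : 3 ≤ n) (hodd : Odd n) :
    IsGreatest
      {w : ℝ | ∃ f : ZMod n → ZMod n,
        (∀ x, f x = x - 1 ∨ f x = x + 1) ∧
        w = (∑ a : ZMod n, (fiberCard f a : ℝ) ^ 2) / (n : ℝ) ^ 2}
      ((2 * n - 1) / (n : ℝ) ^ 2) := by
  have hcast : ∀ f : ZMod n → ZMod n,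
      (∑ a : ZMod n, (fiberCard f a : ℝ) ^ 2) = ((∑ a : ZMod n, (fiberCard f a) ^ 2 : ℕ) : ℝ) := by
    intro f; push_cast; rfl
  constructor
  · refine ⟨fopt n, fun x => fopt_mem x, ?_⟩
    rw [hcast, fopt_sum hn hodd, Nat.cast_sub (by omega : 1 ≤ 2 * n)]
    push_cast
    ring_nf
  · rintro w ⟨f, hf, rfl⟩
    have hnum : (∑ a : ZMod n, (fiberCard f a : ℝ) ^ 2) ≤ 2 * n - 1 := by
      rw [hcast]
      have h := upper_bound hn hodd f hf
      calc ((∑ a : ZMod n, (fiberCard f a) ^ 2 : ℕ) : ℝ)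
          ≤ ((2 * n - 1 : ℕ) : ℝ) := by exact_mod_cast h
      _ = 2 * n - 1 := by
          rw [Nat.cast_sub (by omega : 1 ≤ 2 * n)]; push_cast; ring
    have hpos : (0:ℝ) < (n:ℝ) ^ 2 := by positivity
    gcongr
end

section
/- Let f : V → V be any deterministic symmetric single-step strategy on the n-cycle C_n (so f(x) ∈ {x−1, x+1} mod n for all x). If n is odd, then the two-agent rendezvous success probability (1/n²)·∑_{a∈V} |f⁻¹(a)|² is at most (2n−1)/n². -/
theorem stmt_5 (n : ℕ) [NeZero n] (hodd : Odd n)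
    (f : ZMod n → ZMod n) (hf : ∀ x, f x = x - 1 ∨ f x = x + 1) :
    (∑ a : ZMod n, (fiberCard f a : ℝ) ^ 2) / (n : ℝ) ^ 2 ≤ (2 * n - 1) / (n : ℝ) ^ 2 := by
  have hn : 1 ≤ n := Nat.one_le_iff_ne_zero.mpr (NeZero.ne n)
  -- fibers sum to n
  have hsum : ∑ a : ZMod n, fiberCard f a = n := by
    have := Finset.card_eq_sum_card_fiberwise (f := f) (s := Finset.univ)
      (t := Finset.univ) (fun x _ => Finset.mem_univ (f x))
    simpa [fiberCard, ZMod.card n] using this.symm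
  -- each fiber has size ≤ 2
  have hle : ∀ a : ZMod n, fiberCard f a ≤ 2 := by
    intro a
    have hsub : (Finset.univ.filter (fun x => f x = a)) ⊆ {a + 1, a - 1} := by
      intro x hx
      simp only [Finset.mem_filter, Finset.mem_univ, true_and] at hx
      rcases hf x with h | h
      · have : x - 1 = a := h ▸ hx
        simp only [Finset.mem_insert, Finset.mem_singleton]
        left
        linear_combination this
      · have : x + 1 = a := h ▸ hx
        simp only [Finset.mem_insert, Finset.mem_singleton]
        right
        linear_combination this
    calc fiberCard f a ≤ ({a + 1, a - 1} : Finset (ZMod n)).card := Finset.card_le_card hsub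
      _ ≤ 2 := (Finset.card_insert_le _ _).trans (by simp)
  -- some fiber has odd size
  obtain ⟨a0, ha0⟩ : ∃ a0 : ZMod n, Odd (fiberCard f a0) := by
    by_contra h
    push_neg at h
    simp only [Nat.not_odd_iff_even] at h
    have : Even (∑ a : ZMod n, fiberCard f a) :=
      Finset.even_sum _ (fun a _ => h a)
    rw [hsum] at this
    exact (Nat.not_even_iff_odd.mpr hodd) this
  have ha1 : fiberCard f a0 = 1 := by
    have := hle a0
    interval_cases h : fiberCard f a0 <;> simp_all [Nat.odd_iff]
  -- key natural-number bound
  have key : ∑ a : ZMod n, (fiberCard f a) ^ 2 ≤ 2 * n - 1 := by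
    have hsplit : ∑ a : ZMod n, (fiberCard f a) ^ 2
        = (fiberCard f a0) ^ 2 + ∑ a ∈ Finset.univ.erase a0, (fiberCard f a) ^ 2 :=
      (Finset.add_sum_erase _ _ (Finset.mem_univ a0)).symm
    have hsplit2 : fiberCard f a0 + ∑ a ∈ Finset.univ.erase a0, fiberCard f a = n := by
      rw [Finset.add_sum_erase _ _ (Finset.mem_univ a0)]; exact hsum
    have hbound : ∑ a ∈ Finset.univ.erase a0, (fiberCard f a) ^ 2
        ≤ 2 * ∑ a ∈ Finset.univ.erase a0, fiberCard f a := by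
      rw [Finset.mul_sum]
      refine Finset.sum_le_sum fun a _ => ?_
      have := hle a
      nlinarith
    have herase : ∑ a ∈ Finset.univ.erase a0, fiberCard f a = n - 1 := by omega
    rw [hsplit, ha1]
    omega
  -- transfer to ℝ
  have hpos : (0 : ℝ) < (n : ℝ) ^ 2 := by positivity
  rw [div_le_div_iff₀ hpos hpos]
  have hcast : (∑ a : ZMod n, (fiberCard f a : ℝ) ^ 2) ≤ 2 * n - 1 := by
    have : ((∑ a : ZMod n, (fiberCard f a) ^ 2 : ℕ) : ℝ) ≤ ((2 * n - 1 : ℕ) : ℝ) := by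
      exact_mod_cast key
    push_cast [Nat.cast_sub (by omega : 1 ≤ 2 * n)] at this
    convert this using 2
  nlinarith [hcast]
end

section
/- For the n-cycle C_n with 4 | n, there exists a deterministic symmetric single-step strategy f : ℤ/nℤ → ℤ/nℤ with f(x) ∈ {x−1, x+1} such that the two-agent rendezvous success probability (1/n²)·∑_a |f⁻¹(a)|² equals 2/n, i.e., ∑_a |f⁻¹(a)|² = 2n, which is the maximum possible since every fiber has size at most 2. -/
section Fibers

variable {V : Type} [Fintype V] [DecidableEq V]

theorem sum_fiberCard (f : V → V) : ∑ a, fiberCard f a = Fintype.card V :=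
  (Finset.card_eq_sum_card_fiberwise fun x _ => Finset.mem_univ (f x)).symm

theorem sum_fiberCard_sq_le {f : V → V} {k : ℕ} (hf : ∀ a, fiberCard f a ≤ k) :
    ∑ a, fiberCard f a ^ 2 ≤ k * Fintype.card V := by
  calc ∑ a, fiberCard f a ^ 2 ≤ ∑ a, k * fiberCard f a :=
        Finset.sum_le_sum fun a _ => by rw [sq]; exact Nat.mul_le_mul_right _ (hf a)
    _ = k * Fintype.card V := by rw [← Finset.mul_sum, sum_fiberCard]

theorem sum_fiberCard_sq_eq {f : V → V} {k : ℕ} (hf : ∀ a, fiberCard f a = 0 ∨ fiberCard f a = k) :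
    ∑ a, fiberCard f a ^ 2 = k * Fintype.card V := by
  calc ∑ a, fiberCard f a ^ 2 = ∑ a, k * fiberCard f a :=
        Finset.sum_congr rfl fun a _ => by rcases hf a with h | h <;> simp [h, sq]
    _ = k * Fintype.card V := by rw [← Finset.mul_sum, sum_fiberCard]

end Fibers

section Cycle

variable {R : Type}

theorem fiberCard_le_two_of_step [Fintype R] [DecidableEq R] [AddGroupWithOne R] {g : R → R}
    (hg : ∀ x, g x = x - 1 ∨ g x = x + 1) (a : R) : fiberCard g a ≤ 2 := by
  have hsub : Finset.univ.filter (fun x => g x = a) ⊆ {a + 1, a - 1} := by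
    intro x hx
    rw [Finset.mem_filter] at hx
    rcases hg x with h | h <;> simp [← hx.2, h]
  exact (Finset.card_le_card hsub).trans Finset.card_le_two

variable [Ring R]

def pairingStep (φ : R →+* ZMod 4) (x : R) : R :=
  if (φ x).val < 2 then x + 1 else x - 1

theorem pairingStep_eq_sub_or_eq_add (φ : R →+* ZMod 4) (x : R) :
    pairingStep φ x = x - 1 ∨ pairingStep φ x = x + 1 := by
  unfold pairingStep
  split_ifs <;> simp

theorem pairingStep_eq_iff (φ : R →+* ZMod 4) (x a : R) :
    pairingStep φ x = a ↔ x = a - 1 ∧ (φ x).val < 2 ∨ x = a + 1 ∧ ¬(φ x).val < 2 := by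
  unfold pairingStep
  split_ifs with h
  · simp [h, eq_sub_iff_add_eq]
  · simp [h, sub_eq_iff_eq_add]

theorem map_add_one_eq_map_sub_one_add_two (φ : R →+* ZMod 4) (a : R) :
    φ (a + 1) = φ (a - 1) + 2 := by
  simp only [map_add, map_sub, map_one]
  ring

variable [Fintype R] [DecidableEq R]

theorem filter_pairingStep_eq (φ : R →+* ZMod 4) (a : R) :
    Finset.univ.filter (fun x => pairingStep φ x = a) =
      if (φ (a - 1)).val < 2 then {a - 1, a + 1} else ∅ := by
  have hlow : (φ (a - 1)).val < 2 ↔ ¬(φ (a + 1)).val < 2 := by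
    rw [map_add_one_eq_map_sub_one_add_two]
    generalize φ (a - 1) = y
    revert y
    decide
  ext x
  simp only [Finset.mem_filter, Finset.mem_univ, true_and, pairingStep_eq_iff]
  split_ifs with h
  · simp only [Finset.mem_insert, Finset.mem_singleton]
    constructor
    · rintro (⟨hx, -⟩ | ⟨hx, -⟩) <;> simp [hx]
    · rintro (rfl | rfl)
      · exact Or.inl ⟨rfl, h⟩
      · exact Or.inr ⟨rfl, hlow.1 h⟩
  · simp only [Finset.notMem_empty, iff_false, not_or, not_and]
    exact ⟨fun hx => hx ▸ h, fun hx => hx ▸ fun h' => h (hlow.2 h')⟩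

theorem fiberCard_pairingStep (φ : R →+* ZMod 4) (a : R) :
    fiberCard (pairingStep φ) a = 0 ∨ fiberCard (pairingStep φ) a = 2 := by
  have hne : a - 1 ≠ a + 1 := fun h => by
    have := congrArg φ h
    rw [map_add_one_eq_map_sub_one_add_two] at this
    generalize φ (a - 1) = y at this
    revert y
    decide
  rw [fiberCard, filter_pairingStep_eq]
  split_ifs
  · exact Or.inr (Finset.card_pair hne)
  · exact Or.inl Finset.card_empty

end Cycle

theorem stmt_6 (n : ℕ) [NeZero n] (hn : 4 ∣ n) :
    ∃ f : ZMod n → ZMod n,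
      (∀ x, f x = x - 1 ∨ f x = x + 1) ∧
      (∑ a : ZMod n, fiberCard f a ^ 2) = 2 * n ∧
      (∑ a : ZMod n, (fiberCard f a : ℝ) ^ 2) / (n : ℝ) ^ 2 = 2 / (n : ℝ) ∧
      ∀ g : ZMod n → ZMod n, (∀ x, g x = x - 1 ∨ g x = x + 1) →
        (∑ a : ZMod n, fiberCard g a ^ 2) ≤ 2 * n := by
  set f := pairingStep (ZMod.castHom hn (ZMod 4))
  have hsum : ∑ a : ZMod n, fiberCard f a ^ 2 = 2 * n := by
    rw [sum_fiberCard_sq_eq (fiberCard_pairingStep _), ZMod.card]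
  refine ⟨f, pairingStep_eq_sub_or_eq_add _, hsum, ?_, fun g hg => ?_⟩
  · have hsumℝ : ∑ a : ZMod n, (fiberCard f a : ℝ) ^ 2 = 2 * n := by exact_mod_cast hsum
    have hn0 : (n : ℝ) ≠ 0 := Nat.cast_ne_zero.mpr (NeZero.ne n)
    rw [hsumℝ]
    field_simp
  · simpa [ZMod.card] using sum_fiberCard_sq_le (fiberCard_le_two_of_step hg)
end

section
/- For the n-cycle C_n with n odd, two agents starting at distinct uniformly random vertices and using the same deterministic single-step strategy f (f(x) ∈ {x±1} mod n): the maximum success probability ∑_{x≠y}[f(x)=f(y)] / (n(n−1)) equals 1/n. -/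
/-!
If `f x = x ± 1` for every `x`, each fibre `f⁻¹(a)` lies in `{a - 1, a + 1}`, so every vertex
collides with at most one other vertex: there are at most `n` ordered colliding pairs. Swapping
the two agents pairs these off, so their number is even, hence at most `n - 1` when `n` is odd.

The bound is attained. As `2` is invertible mod `n`, the vertices `2k` (`0 ≤ k < n`) run through
the whole cycle; letting `2k` step right for even `k` and left for odd `k` makes `2k` and `2k + 2`
collide for every even `k < n - 1`.
-/

open Finset Function

theorem Finset.even_card_of_involution {ι : Type*} {s : Finset ι} (g : ι → ι)
    (hg : Involutive g) (hfree : ∀ a ∈ s, g a ≠ a) (hmem : ∀ a ∈ s, g a ∈ s) : Even #s := by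
  have h : ∑ _a ∈ s, (1 : ZMod 2) = 0 :=
    sum_involution (fun a _ => g a) (fun _ _ => by decide) (fun a ha _ => hfree a ha) hmem
      (fun a _ => hg a)
  simpa [← ZMod.natCast_eq_zero_iff_even] using h

section Collisions

variable {α β : Type*} [Fintype α] [DecidableEq α] [DecidableEq β]

def collisionPairs (f : α → β) : Finset (α × α) :=
  univ.filter fun p => p.1 ≠ p.2 ∧ f p.1 = f p.2

lemma mem_collisionPairs {f : α → β} {p : α × α} :
    p ∈ collisionPairs f ↔ p.1 ≠ p.2 ∧ f p.1 = f p.2 := by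
  simp [collisionPairs]

lemma even_card_collisionPairs (f : α → β) : Even #(collisionPairs f) := by
  refine even_card_of_involution Prod.swap Prod.swap_swap (fun p hp => ?_) (fun p hp => ?_)
  · exact fun h => (mem_collisionPairs.1 hp).1 (congrArg Prod.snd h)
  · obtain ⟨hne, heq⟩ := mem_collisionPairs.1 hp
    exact mem_collisionPairs.2 ⟨hne.symm, heq.symm⟩

lemma card_collisionPairs_le (f : α → β) (hf : ∀ b, #{x | f x = b} ≤ 2) :
    #(collisionPairs f) ≤ Fintype.card α := by
  refine card_le_card_of_injOn Prod.fst (fun _ _ => mem_univ _) ?_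
  rintro ⟨x, y⟩ hy ⟨x', y'⟩ hy' (rfl : x = x')
  obtain ⟨hxy, hfy : f x = f y⟩ := mem_collisionPairs.1 hy
  obtain ⟨hxy', hfy' : f x = f y'⟩ := mem_collisionPairs.1 hy'
  by_contra hne
  have hyy' : y ≠ y' := fun h => hne (by simp [h])
  have hsub : {x, y, y'} ⊆ ({z | f z = f x} : Finset α) := by
    simp [insert_subset_iff, ← hfy, ← hfy']
  have := (card_le_card hsub).trans (hf (f x))
  rw [card_eq_three.2 ⟨x, y, y', hxy, hxy', hyy', rfl⟩] at this
  omega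

end Collisions

section Steps

variable {G : Type*} [AddGroup G] [Fintype G] [DecidableEq G] {c : G}

lemma card_fiber_le_two_of_step {f : G → G} (hf : ∀ x, f x = x - c ∨ f x = x + c) (a : G) :
    #{x | f x = a} ≤ 2 := by
  refine (card_le_card fun x hx => ?_).trans (card_le_two (a := a + c) (b := a - c))
  obtain rfl := (mem_filter.1 hx).2
  rcases hf x with h | h <;> simp [h]

lemma card_collisionPairs_le_of_step (hG : Odd (Fintype.card G)) {f : G → G}
    (hf : ∀ x, f x = x - c ∨ f x = x + c) : #(collisionPairs f) ≤ Fintype.card G - 1 := by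
  have hle := card_collisionPairs_le f (card_fiber_le_two_of_step hf)
  obtain ⟨k, hk⟩ := even_card_collisionPairs f
  obtain ⟨m, hm⟩ := hG
  omega

end Steps

def partner (k : ℕ) : ℕ := if Even k then k + 1 else k - 1

lemma partner_two_mul (i : ℕ) : partner (2 * i) = 2 * i + 1 := if_pos (even_two_mul i)

lemma partner_two_mul_add_one (i : ℕ) : partner (2 * i + 1) = 2 * i :=
  if_neg (Nat.not_even_two_mul_add_one i)

lemma partner_ne (k : ℕ) : partner k ≠ k := by
  rcases Nat.even_or_odd' k with ⟨i, rfl | rfl⟩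
  · rw [partner_two_mul]; omega
  · rw [partner_two_mul_add_one]; omega

lemma partner_lt {k n : ℕ} (hk : k < n - 1) : partner k < n := by
  unfold partner
  split_ifs <;> omega

lemma two_mul_add_neg_one_pow_partner {R : Type*} [CommRing R] (k : ℕ) :
    2 * (partner k : R) + (-1) ^ partner k = 2 * k + (-1) ^ k := by
  rcases Nat.even_or_odd' k with ⟨i, rfl | rfl⟩
  · rw [partner_two_mul, (odd_two_mul_add_one i).neg_one_pow, (even_two_mul i).neg_one_pow]
    push_cast
    ring
  · rw [partner_two_mul_add_one, (odd_two_mul_add_one i).neg_one_pow,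
      (even_two_mul i).neg_one_pow]
    push_cast
    ring

section Zigzag

variable {n : ℕ}

lemma val_inv_two_mul_two_mul (hn : Odd n) {k : ℕ} (hk : k < n) :
    ((2 : ZMod n)⁻¹ * (2 * k)).val = k := by
  have h2 : (2 : ZMod n)⁻¹ * 2 = 1 := by
    rw [mul_comm]
    exact_mod_cast ZMod.coe_mul_inv_eq_one 2 (Nat.coprime_two_left.2 hn)
  rw [← mul_assoc, h2, one_mul, ZMod.val_cast_of_lt hk]

def zigzag (n : ℕ) (x : ZMod n) : ZMod n := x + (-1) ^ ((2 : ZMod n)⁻¹ * x).val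

lemma zigzag_step (x : ZMod n) : zigzag n x = x - 1 ∨ zigzag n x = x + 1 := by
  rcases neg_one_pow_eq_or (ZMod n) ((2 : ZMod n)⁻¹ * x).val with h | h <;>
    simp [zigzag, h, sub_eq_add_neg]

lemma zigzag_two_mul (hn : Odd n) {k : ℕ} (hk : k < n) :
    zigzag n (2 * k) = 2 * k + (-1) ^ k := by
  rw [zigzag, val_inv_two_mul_two_mul hn hk]

lemma le_card_collisionPairs_zigzag [NeZero n] (hn : Odd n) :
    n - 1 ≤ #(collisionPairs (zigzag n)) := by
  have hinj {i j : ℕ} (hi : i < n) (hj : j < n) (h : (2 * i : ZMod n) = 2 * j) : i = j := by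
    rw [← val_inv_two_mul_two_mul hn hi, h, val_inv_two_mul_two_mul hn hj]
  rw [← card_range (n - 1)]
  refine card_le_card_of_injOn (fun k => ((2 * k : ZMod n), (2 * partner k : ZMod n)))
    (fun k hk => ?_) (fun k hk l hl h => ?_)
  · have hk : k < n - 1 := mem_range.1 hk
    refine mem_collisionPairs.2
      ⟨fun h => partner_ne k (hinj (by omega) (partner_lt hk) h).symm, ?_⟩
    rw [zigzag_two_mul hn (by omega), zigzag_two_mul hn (partner_lt hk),
      two_mul_add_neg_one_pow_partner]
  · have hk : k < n - 1 := mem_range.1 hk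
    have hl : l < n - 1 := mem_range.1 hl
    exact hinj (by omega) (by omega) (congrArg Prod.fst h)

lemma card_collisionPairs_le_sub_one [NeZero n] (hn : Odd n) {f : ZMod n → ZMod n}
    (hf : ∀ x, f x = x - 1 ∨ f x = x + 1) : #(collisionPairs f) ≤ n - 1 := by
  simpa only [ZMod.card] using card_collisionPairs_le_of_step (by rwa [ZMod.card]) hf

lemma card_collisionPairs_zigzag [NeZero n] (hn : Odd n) :
    #(collisionPairs (zigzag n)) = n - 1 :=
  (card_collisionPairs_le_sub_one hn zigzag_step).antisymm (le_card_collisionPairs_zigzag hn)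

end Zigzag

theorem stmt_10 (n : ℕ) [NeZero n] (hn : 3 ≤ n) (hodd : Odd n) :
    IsGreatest
      {w : ℝ | ∃ f : ZMod n → ZMod n,
        (∀ x, f x = x - 1 ∨ f x = x + 1) ∧
        w = ((Finset.univ.filter
              (fun p : ZMod n × ZMod n => p.1 ≠ p.2 ∧ f p.1 = f p.2)).card : ℝ) /
            ((n : ℝ) * ((n : ℝ) - 1))}
      (1 / (n : ℝ)) := by
  have hn1 : (0 : ℝ) < n - 1 := sub_pos.2 (by exact_mod_cast (by omega : 1 < n))
  have hmax : ((n - 1 : ℕ) : ℝ) / (n * (n - 1)) = 1 / n := by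
    rw [Nat.cast_pred (by omega)]
    field_simp [hn1.ne']
  refine ⟨⟨zigzag n, zigzag_step, ?_⟩, ?_⟩
  · change _ = (#(collisionPairs (zigzag n)) : ℝ) / _
    rw [card_collisionPairs_zigzag hodd, hmax]
  · rintro w ⟨f, hf, rfl⟩
    rw [← hmax]
    gcongr
    exact card_collisionPairs_le_sub_one hodd hf
end

section
/- Two agents on the triangle graph C_3 (= K_3) with shared randomness (classical correlated strategies), starting at arbitrary independent uniform positions and each moving to a different vertex, cannot achieve rendezvous success probability greater than 5/9. -/
lemma aux_card (f g : ZMod 3 → ZMod 3) (hf : ∀ x, f x ≠ x) (hg : ∀ y, g y ≠ y) :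
    (Finset.univ.filter (fun p : ZMod 3 × ZMod 3 => f p.1 = g p.2)).card ≤ 5 := by
  revert hf hg; revert f g; decide

lemma aux_sum (f g : ZMod 3 → ZMod 3) (hf : ∀ x, f x ≠ x) (hg : ∀ y, g y ≠ y) :
    (∑ x : ZMod 3, ∑ y : ZMod 3, (if f x = g y then (1:ℝ) else 0)) ≤ 5 := by
  have h := aux_card f g hf hg
  have : (∑ x : ZMod 3, ∑ y : ZMod 3, (if f x = g y then (1:ℝ) else 0))
      = ((Finset.univ.filter (fun p : ZMod 3 × ZMod 3 => f p.1 = g p.2)).card : ℝ) := by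
    rw [← Finset.sum_product', Finset.univ_product_univ, Finset.sum_boole]
  rw [this]
  exact_mod_cast h

theorem stmt_16 (Λ : Type) [Fintype Λ] (μ : Λ → ℝ)
    (hμ : ∀ l, 0 ≤ μ l) (hμ1 : ∑ l : Λ, μ l = 1)
    (f g : Λ → ZMod 3 → ZMod 3)
    (hf : ∀ l x, f l x ≠ x) (hg : ∀ l y, g l y ≠ y) :
    (1 / 9 : ℝ) * ∑ x : ZMod 3, ∑ y : ZMod 3, ∑ l : Λ,
        μ l * (if f l x = g l y then 1 else 0) ≤ 5 / 9 := by
  have key : (∑ x : ZMod 3, ∑ y : ZMod 3, ∑ l : Λ,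
      μ l * (if f l x = g l y then (1:ℝ) else 0)) ≤ 5 := by
    have : (∑ x : ZMod 3, ∑ y : ZMod 3, ∑ l : Λ,
        μ l * (if f l x = g l y then (1:ℝ) else 0))
        = ∑ l : Λ, μ l * (∑ x : ZMod 3, ∑ y : ZMod 3,
          (if f l x = g l y then (1:ℝ) else 0)) := by
      rw [show (∑ x : ZMod 3, ∑ y : ZMod 3, ∑ l : Λ,
          μ l * (if f l x = g l y then (1:ℝ) else 0))
          = ∑ x : ZMod 3, ∑ l : Λ, ∑ y : ZMod 3,
          μ l * (if f l x = g l y then (1:ℝ) else 0) from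
        Finset.sum_congr rfl fun x _ => Finset.sum_comm]
      rw [Finset.sum_comm]
      simp only [Finset.mul_sum]
    rw [this]
    calc ∑ l : Λ, μ l * (∑ x : ZMod 3, ∑ y : ZMod 3,
          (if f l x = g l y then (1:ℝ) else 0))
        ≤ ∑ l : Λ, μ l * 5 := by
          apply Finset.sum_le_sum
          intro l _
          exact mul_le_mul_of_nonneg_left (aux_sum _ _ (hf l) (hg l)) (hμ l)
      _ = 5 := by rw [← Finset.sum_mul, hμ1, one_mul]
  linarith
end

section
/- Let f, g : ℤ/nℤ → ℤ/nℤ satisfy f(x) ∈ {x−1, x+1} and g(y) ∈ {y−1, y+1} for all x, y, with n odd. Then |{(x,y) ∈ (ℤ/nℤ)² : f(x) = g(y)}| ≤ 2n − 1. -/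
theorem stmt_17 (n : ℕ) [NeZero n] (hodd : Odd n)
    (f g : ZMod n → ZMod n)
    (hf : ∀ x, f x = x - 1 ∨ f x = x + 1)
    (hg : ∀ y, g y = y - 1 ∨ g y = y + 1) :
    (Finset.univ.filter (fun p : ZMod n × ZMod n => f p.1 = g p.2)).card ≤ 2 * n - 1 := by
  classical
  rcases eq_or_ne n 1 with rfl | hn1
  · calc (Finset.univ.filter (fun p : ZMod 1 × ZMod 1 => f p.1 = g p.2)).card
        ≤ (Finset.univ : Finset (ZMod 1 × ZMod 1)).card := Finset.card_filter_le _ _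
      _ ≤ 1 := by simp
  have hn2 : (2 : ZMod n) ≠ 0 := by
    intro h
    have h2 : (n : ℕ) ∣ 2 := by
      have : ((2 : ℕ) : ZMod n) = 0 := by exact_mod_cast h
      exact (ZMod.natCast_eq_zero_iff 2 n).mp this
    have hle := Nat.le_of_dvd (by norm_num) h2
    have hne := NeZero.ne n
    interval_cases n <;> simp_all [Nat.odd_iff]
  set S := Finset.univ.filter (fun p : ZMod n × ZMod n => f p.1 = g p.2) with hS
  set T : ZMod n → Finset (ZMod n) := fun x => Finset.univ.filter (fun y => f x = g y) with hT
  have h1 : S.card = ∑ x : ZMod n, (T x).card := by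
    rw [hS, ← Finset.univ_product_univ, Finset.card_filter, Finset.sum_product]
    exact Finset.sum_congr rfl fun x _ => (Finset.card_filter _ _).symm
  have hTsub : ∀ x, T x ⊆ {f x - 1, f x + 1} := by
    intro x y hy
    simp only [hT, Finset.mem_filter] at hy
    rcases hg y with h | h
    · have : y = f x + 1 := by rw [hy.2, h]; ring
      simp [this]
    · have : y = f x - 1 := by rw [hy.2, h]; ring
      simp [this]
  have hT2 : ∀ x, (T x).card ≤ 2 := by
    intro x
    calc (T x).card ≤ ({f x - 1, f x + 1} : Finset (ZMod n)).card := Finset.card_le_card (hTsub x)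
      _ ≤ 2 := Finset.card_insert_le _ _ |>.trans (by simp)
  by_contra hcon
  push_neg at hcon
  have hcard : ZMod n → True := fun _ => trivial
  have hn : S.card ≤ 2 * n := by
    rw [h1]
    calc ∑ x : ZMod n, (T x).card ≤ ∑ x : ZMod n, 2 := Finset.sum_le_sum (fun x _ => hT2 x)
      _ = 2 * n := by simp [ZMod.card, mul_comm]
  have hSeq : S.card = 2 * n := le_antisymm hn (by omega)
  -- each term equals 2
  have heach : ∀ x, (T x).card = 2 := by
    by_contra hc
    push_neg at hc
    obtain ⟨x0, hx0⟩ := hc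
    have hx0' : (T x0).card < 2 := lt_of_le_of_ne (hT2 x0) hx0
    have : ∑ x : ZMod n, (T x).card < ∑ x : ZMod n, 2 := by
      apply Finset.sum_lt_sum (fun x _ => hT2 x) ⟨x0, Finset.mem_univ _, hx0'⟩
    rw [← h1, hSeq] at this
    simp [ZMod.card, mul_comm] at this
  have hfull : ∀ x, g (f x - 1) = f x ∧ g (f x + 1) = f x := by
    intro x
    have hsub := hTsub x
    have hle : ({f x - 1, f x + 1} : Finset (ZMod n)).card ≤ (T x).card := by
      rw [heach x]
      exact Finset.card_insert_le _ _ |>.trans (by simp)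
    have heq : T x = ({f x - 1, f x + 1} : Finset (ZMod n)) :=
      Finset.eq_of_subset_of_card_le hsub hle
    constructor
    · have : f x - 1 ∈ T x := heq ▸ (by simp)
      simpa [hT, eq_comm] using (Finset.mem_filter.mp this).2.symm
    · have : f x + 1 ∈ T x := heq ▸ (by simp)
      simpa [hT, eq_comm] using (Finset.mem_filter.mp this).2.symm
  -- define range predicate
  set P : ZMod n → Prop := fun z => ∃ x, f x = z with hP
  have key : ∀ z, P (z + 2) ↔ ¬ P z := by
    intro z
    constructor
    · rintro ⟨x1, hx1⟩ ⟨x0, hx0⟩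
      have h1 := (hfull x1).1
      have h2 := (hfull x0).2
      rw [hx1] at h1
      rw [hx0] at h2
      have : z + 2 - 1 = z + 1 := by ring
      rw [this] at h1
      rw [h1] at h2
      exact hn2 (by linear_combination h2)
    · intro hz
      by_contra hz2
      rcases hf (z + 1) with h | h
      · exact hz ⟨z + 1, by rw [h]; ring⟩
      · exact hz2 ⟨z + 1, by rw [h]; ring⟩
  have alt : ∀ (k : ℕ) (z : ZMod n), P (z + 2 * k) ↔ (Even k ↔ P z) := by
    intro k
    induction k with
    | zero => intro z; simp
    | succ m ih =>
      intro z
      have : (z + 2 * (m + 1 : ℕ) : ZMod n) = (z + 2 * m) + 2 := by push_cast; ring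
      rw [this, key, ih z, Nat.even_add_one]
      tauto
  have := alt n 0
  rw [show ((0 : ZMod n) + 2 * n : ZMod n) = 0 by simp] at this
  have hne : ¬ Even n := Nat.not_even_iff_odd.mpr hodd
  tauto
end

section
/- On the cycle C_n with n ≡ 2 (mod 4), any symmetric deterministic single-step strategy f (f(x) ∈ {x±1}) has ∑_a |f⁻¹(a)|² ≤ 2n − 2; hence the two-agent symmetric rendezvous success probability with arbitrary uniform starts is at most (2n−2)/n² = 2(n−1)/n². -/
open Finset

lemma key_bound (n : ℕ) [NeZero n] (hn : n % 4 = 2) (t : ZMod n → Bool) :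
    2 * (univ.filter (fun x : ZMod n => t x = true ∧ t (x + 2) = false)).card ≤ n - 2 := by
  set D := univ.filter (fun x : ZMod n => t x = true ∧ t (x + 2) = false) with hD
  set A := univ.filter (fun x : ZMod n => t x = false ∧ t (x + 2) = true) with hA
  -- D.card = A.card
  have hsum : ∑ x : ZMod n, (if t (x + 2) = true then (1:ℤ) else 0)
      = ∑ x : ZMod n, (if t x = true then (1:ℤ) else 0) :=
    Fintype.sum_equiv (Equiv.addRight (2 : ZMod n)) _ _ (fun x => rfl)
  have hDA : D.card = A.card := by
    have h1 : ∀ x : ZMod n,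
        (if t x = true ∧ t (x+2) = false then (1:ℤ) else 0)
          - (if t x = false ∧ t (x+2) = true then (1:ℤ) else 0)
        = (if t x = true then (1:ℤ) else 0) - (if t (x+2) = true then 1 else 0) := by
      intro x
      cases h : t x <;> cases h2 : t (x+2) <;> simp [h, h2]
    have h2 : ∑ x : ZMod n, ((if t x = true ∧ t (x+2) = false then (1:ℤ) else 0)
          - (if t x = false ∧ t (x+2) = true then (1:ℤ) else 0)) = 0 := by
      rw [Finset.sum_congr rfl (fun x _ => h1 x), Finset.sum_sub_distrib, hsum, sub_self]
    rw [Finset.sum_sub_distrib, Finset.sum_boole, Finset.sum_boole] at h2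
    rw [hD, hA]
    exact_mod_cast sub_eq_zero.mp h2
  -- E = D ∪ A
  set E := univ.filter (fun x : ZMod n => ¬ t x = t (x + 2)) with hE
  have hEDA : E = D ∪ A := by
    rw [hE, hD, hA, ← Finset.filter_or]
    apply Finset.filter_congr
    intro x _
    cases h : t x <;> cases h2 : t (x+2) <;> simp [h, h2]
  have hdisj : Disjoint D A := by
    rw [Finset.disjoint_left]
    intro x hx hx'
    rw [hD, Finset.mem_filter] at hx
    rw [hA, Finset.mem_filter] at hx'
    simp_all
  have hEcard : E.card = 2 * D.card := by
    rw [hEDA, Finset.card_union_of_disjoint hdisj, hDA]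
    omega
  -- E ≠ univ
  have hne : E ≠ univ := by
    intro h
    have hall : ∀ x : ZMod n, t (x + 2) = ! t x := by
      intro x
      have : x ∈ E := h ▸ Finset.mem_univ x
      rw [hE, Finset.mem_filter] at this
      cases ht : t x <;> cases ht2 : t (x+2) <;> rw [ht, ht2] at this <;>
        first | rfl | exact absurd rfl this.2
    have hiter : ∀ k : ℕ, t ((2 * k : ℕ) : ZMod n)
        = (if k % 2 = 0 then t 0 else ! t 0) := by
      intro k
      induction k with
      | zero => simp
      | succ k ih =>
        have hc : ((2 * (k+1) : ℕ) : ZMod n) = ((2 * k : ℕ) : ZMod n) + 2 := by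
          push_cast; ring
        rw [hc, hall, ih]
        rcases Nat.even_or_odd k with hk | hk
        · have h1 : k % 2 = 0 := Nat.even_iff.mp hk
          have h2 : (k+1) % 2 = 1 := by omega
          simp [h1, h2]
        · have h1 : k % 2 = 1 := Nat.odd_iff.mp hk
          have h2 : (k+1) % 2 = 0 := by omega
          simp [h1, h2]
    have hm := hiter (n / 2)
    have h2m : 2 * (n / 2) = n := by omega
    have hmod : (n / 2) % 2 = 1 := by omega
    rw [h2m, hmod, ZMod.natCast_self] at hm
    simp at hm
  have hlt : E.card < n := by
    have hle : E.card ≤ Fintype.card (ZMod n) := Finset.card_le_univ E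
    rw [ZMod.card] at hle
    rcases lt_or_eq_of_le hle with h | h
    · exact h
    · exfalso
      apply hne
      apply Finset.eq_univ_of_card
      rw [h, ZMod.card]
  omega

theorem stmt_19 (n : ℕ) [NeZero n] (hn : n % 4 = 2)
    (f : ZMod n → ZMod n) (hf : ∀ x, f x = x - 1 ∨ f x = x + 1) :
    (∑ a : ZMod n, fiberCard f a ^ 2 ≤ 2 * n - 2) ∧
    (∑ a : ZMod n, (fiberCard f a : ℝ) ^ 2) / (n : ℝ) ^ 2 ≤
      (2 * (n : ℝ) - 2) / (n : ℝ) ^ 2 := by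
  have h1 : ∑ a : ZMod n, fiberCard f a ^ 2 ≤ 2 * n - 2 := by
    rcases eq_or_ne n 2 with rfl | hne2
    · -- n = 2
      have hf' : ∀ x : ZMod 2, f x = x + 1 := by
        intro x
        rcases hf x with h | h
        · have h2 : ∀ y : ZMod 2, y - 1 = y + 1 := by decide
          rw [h, h2]
        · exact h
      have hfc : ∀ a : ZMod 2, fiberCard f a = 1 := by
        intro a
        unfold fiberCard
        have h : (univ.filter (fun x => f x = a)) = univ.filter (fun x => x = a - 1) := by
          apply Finset.filter_congr
          intro x _
          rw [hf' x]
          constructor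
          · intro h; rw [← h]; ring
          · intro h; rw [h]; ring
        rw [h, Finset.filter_eq']
        simp
      simp [hfc]
    · -- n ≥ 6
      have hn6 : 6 ≤ n := by omega
      have h20 : (2 : ZMod n) ≠ 0 := by
        have : ((2 : ℕ) : ZMod n) ≠ 0 := by
          rw [Ne, ZMod.natCast_eq_zero_iff]
          intro h
          have := Nat.le_of_dvd (by norm_num) h
          omega
        simpa using this
      have hx2 : ∀ x : ZMod n, x + 1 ≠ x - 1 := by
        intro x h
        apply h20
        linear_combination h
      set t : ZMod n → Bool := fun x => decide (f x = x + 1) with ht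
      have ht_true : ∀ x, t x = true ↔ f x = x + 1 := by
        intro x; simp [ht]
      have ht_false : ∀ x, t x = false ↔ f x = x - 1 := by
        intro x
        constructor
        · intro h
          rcases hf x with h' | h'
          · exact h'
          · exfalso
            have := (ht_true x).mpr h'
            rw [h] at this
            exact Bool.false_ne_true this
        · intro h
          cases hb : t x
          · rfl
          · exfalso
            have := (ht_true x).mp hb
            rw [h] at this
            exact hx2 x this.symm
      have hfib : ∀ a : ZMod n, fiberCard f a
          = (if f (a+1) = a then 1 else 0) + (if f (a-1) = a then 1 else 0) := by
        intro a
        unfold fiberCard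
        have hset : univ.filter (fun x => f x = a)
            = ({a+1, a-1} : Finset (ZMod n)).filter (fun x => f x = a) := by
          ext x
          simp only [Finset.mem_filter, Finset.mem_univ, true_and, Finset.mem_insert,
            Finset.mem_singleton]
          constructor
          · intro hx
            refine ⟨?_, hx⟩
            rcases hf x with h | h
            · left; rw [h] at hx; rw [← hx]; ring
            · right; rw [h] at hx; rw [← hx]; ring
          · exact fun h => h.2
        have hne : (a+1 : ZMod n) ≠ a - 1 := hx2 a
        rw [hset, Finset.filter_insert, Finset.filter_singleton]
        split_ifs with hc1 hc2 hc2 <;>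
          simp [Finset.card_insert_of_notMem, hne]
      have hsq : ∀ a : ZMod n, fiberCard f a ^ 2
          = fiberCard f a + 2 * (if f (a+1) = a ∧ f (a-1) = a then 1 else 0) := by
        intro a
        rw [hfib a]
        by_cases hc1 : f (a+1) = a <;> by_cases hc2 : f (a-1) = a <;> simp [hc1, hc2]
      have hsumfib : ∑ a : ZMod n, fiberCard f a = n := by
        have h := Finset.card_eq_sum_card_fiberwise
          (s := (univ : Finset (ZMod n))) (t := univ) (f := f)
          (fun x _ => Finset.mem_univ (f x))
        unfold fiberCard
        rw [← h, Finset.card_univ, ZMod.card]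
      set S := univ.filter (fun a : ZMod n => f (a+1) = a ∧ f (a-1) = a) with hSdef
      set D := univ.filter (fun x : ZMod n => t x = true ∧ t (x + 2) = false) with hDdef
      have hSD : S = D.image (fun x => x + 1) := by
        ext a
        simp only [hSdef, hDdef, Finset.mem_image, Finset.mem_filter, Finset.mem_univ,
          true_and]
        constructor
        · rintro ⟨hc1, hc2⟩
          refine ⟨a - 1, ⟨?_, ?_⟩, by ring⟩
          · rw [ht_true, show a - 1 + 1 = a by ring]
            exact hc2
          · rw [ht_false, show a - 1 + 2 = a + 1 by ring, show a + 1 - 1 = a by ring]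
            exact hc1
        · rintro ⟨x, ⟨hx1, hx2⟩, rfl⟩
          rw [ht_true] at hx1
          rw [ht_false] at hx2
          constructor
          · rw [show x + 1 + 1 = x + 2 by ring, hx2]; ring
          · rw [show x + 1 - 1 = x by ring, hx1]
      have hScard : S.card = D.card := by
        rw [hSD, Finset.card_image_of_injective _ (add_left_injective 1)]
      have hkey := key_bound n hn t
      rw [← hDdef] at hkey
      have hcalc : ∑ a : ZMod n, fiberCard f a ^ 2 = n + 2 * S.card := by
        rw [Finset.sum_congr rfl (fun a _ => hsq a), Finset.sum_add_distrib, hsumfib,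
          ← Finset.mul_sum, hSdef, Finset.card_filter]
      rw [hcalc]
      omega
  refine ⟨h1, ?_⟩
  have hn2 : 2 ≤ n := by omega
  have hpos : (0:ℝ) < (n : ℝ) ^ 2 := by
    have : (0:ℝ) < (n:ℝ) := by exact_mod_cast Nat.pos_of_ne_zero (NeZero.ne n)
    positivity
  rw [div_le_div_iff_of_pos_right hpos]
  have hcast : (∑ a : ZMod n, (fiberCard f a : ℝ) ^ 2)
      = ((∑ a : ZMod n, fiberCard f a ^ 2 : ℕ) : ℝ) := by
    push_cast
    rfl
  have hb : ((2 * n - 2 : ℕ) : ℝ) = 2 * (n:ℝ) - 2 := by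
    have h22 : (2:ℕ) ≤ 2 * n := by omega
    rw [Nat.cast_sub h22]
    push_cast
    ring
  rw [hcast, ← hb]
  exact_mod_cast h1
end
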